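/- arXiv:1506.05667 — 2 statements merged into one kernel-verified Lean document; each statement's English description precedes it below -/
import Mathlib

section
/- Let 𝒢 be a family of connected non-trivial graphs on a common vertex set V and let ℋ be a family of non-trivial graphs on a common vertex set V'. If there exists a simultaneous adjacency basis B of ℋ which is also a simultaneous dominating set of ℋ and which satisfies B ⊄ N_H(v) for every H ∈ ℋ and every v ∈ V', then Sd_A(𝒢⊙ℋ) = |V| · Sd_A(ℋ). -/
open SimpleGraph

/-- `S` is a metric generator for `G`: every pair of distinct vertices is
distinguished by some element of `S` via the shortest-path distance. -/
def IsMetricGen {V : Type*} (G : SimpleGraph V) (S : Set V) : Prop :=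
  ∀ u v : V, u ≠ v → ∃ s ∈ S, G.dist s u ≠ G.dist s v

/-- `S` is an adjacency generator for `G`. -/
def IsAdjGen {V : Type*} (G : SimpleGraph V) (S : Set V) : Prop :=
  ∀ x y : V, x ∉ S → y ∉ S → x ≠ y → ∃ s ∈ S, Xor' (G.Adj s x) (G.Adj s y)

/-- `S` is a simultaneous metric generator for the family `𝒢`. -/
def IsSimMetricGen {V : Type*} (𝒢 : Set (SimpleGraph V)) (S : Set V) : Prop :=
  ∀ G ∈ 𝒢, IsMetricGen G S

/-- `S` is a simultaneous adjacency generator for the family `ℋ`. -/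
def IsSimAdjGen {V : Type*} (ℋ : Set (SimpleGraph V)) (S : Set V) : Prop :=
  ∀ H ∈ ℋ, IsAdjGen H S

/-- The simultaneous metric dimension of a family of graphs. -/
noncomputable def Sd {V : Type*} (𝒢 : Set (SimpleGraph V)) : ℕ :=
  sInf {n | ∃ S : Set V, S.ncard = n ∧ IsSimMetricGen 𝒢 S}

/-- The simultaneous adjacency dimension of a family of graphs. -/
noncomputable def SdA {V : Type*} (ℋ : Set (SimpleGraph V)) : ℕ :=
  sInf {n | ∃ S : Set V, S.ncard = n ∧ IsSimAdjGen ℋ S}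

/-- The adjacency dimension of a graph. -/
noncomputable def adjDim {V : Type*} (G : SimpleGraph V) : ℕ := SdA {G}

/-- `B` is an adjacency basis of `G`. -/
def IsAdjBasis {V : Type*} (G : SimpleGraph V) (B : Set V) : Prop :=
  IsAdjGen G B ∧ B.ncard = adjDim G

/-- `B` is a simultaneous adjacency basis of the family `ℋ`. -/
def IsSimAdjBasis {V : Type*} (ℋ : Set (SimpleGraph V)) (B : Set V) : Prop :=
  IsSimAdjGen ℋ B ∧ B.ncard = SdA ℋ

/-- `D` is a dominating set of `G`. -/
def IsDomSet {V : Type*} (G : SimpleGraph V) (D : Set V) : Prop :=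
  ∀ v ∉ D, ∃ u ∈ D, G.Adj u v

/-- `D` is a simultaneous dominating set of the family `𝒢`. -/
def IsSimDomSet {V : Type*} (𝒢 : Set (SimpleGraph V)) (D : Set V) : Prop :=
  ∀ G ∈ 𝒢, IsDomSet G D

/-- The simultaneous domination number of a family of graphs. -/
noncomputable def Sgamma {V : Type*} (𝒢 : Set (SimpleGraph V)) : ℕ :=
  sInf {n | ∃ D : Set V, D.ncard = n ∧ IsSimDomSet 𝒢 D}

/-- The domination number of a graph. -/
noncomputable def domNum {V : Type*} (G : SimpleGraph V) : ℕ := Sgamma {G}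

/-- `γ'(G) = min over vertices `v` of `γ(G - v)`. -/
noncomputable def gammaPrime {V : Type*} (G : SimpleGraph V) : ℕ :=
  sInf {n | ∃ v : V, n = domNum (G.induce {v}ᶜ)}

/-- The corona product `G ⊙ H`: one copy of `G` together with a copy of `H`
for each vertex `i` of `G`, joining `i` to every vertex of its copy. -/
def corona {V V' : Type*} (G : SimpleGraph V) (H : SimpleGraph V') :
    SimpleGraph (V ⊕ V × V') where
  Adj x y :=
    match x, y with
    | Sum.inl i, Sum.inl j => G.Adj i j
    | Sum.inl i, Sum.inr p => i = p.1
    | Sum.inr p, Sum.inl j => p.1 = j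
    | Sum.inr p, Sum.inr q => p.1 = q.1 ∧ H.Adj p.2 q.2
  symm := by
    constructor
    rintro (i | p) (j | q) h
    · exact G.adj_symm h
    · exact h.symm
    · exact h.symm
    · exact ⟨h.1.symm, H.adj_symm h.2⟩
  loopless := by
    constructor
    rintro (i | p) h
    · exact G.loopless.irrefl i h
    · exact H.loopless.irrefl p.2 h.2

/-- The family `{G ⊙ H : G ∈ 𝒢, H ∈ ℋ}` of corona products. -/
def coronaFam {V V' : Type*} (𝒢 : Set (SimpleGraph V)) (ℋ : Set (SimpleGraph V')) :
    Set (SimpleGraph (V ⊕ V × V')) :=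
  {K | ∃ G ∈ 𝒢, ∃ H ∈ ℋ, K = corona G H}

/-- The join `G + H` of two (vertex-disjoint) graphs. -/
def joinG {V₁ V₂ : Type*} (G : SimpleGraph V₁) (H : SimpleGraph V₂) :
    SimpleGraph (V₁ ⊕ V₂) where
  Adj x y :=
    match x, y with
    | Sum.inl a, Sum.inl b => G.Adj a b
    | Sum.inl _, Sum.inr _ => True
    | Sum.inr _, Sum.inl _ => True
    | Sum.inr a, Sum.inr b => H.Adj a b
  symm := by
    constructor
    rintro (a | a) (b | b) h
    · exact G.adj_symm h
    · trivial
    · trivial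
    · exact H.adj_symm h
  loopless := by
    constructor
    rintro (a | a) h
    · exact G.loopless.irrefl a h
    · exact H.loopless.irrefl a h

/-- The family `{G + H : G ∈ 𝒢, H ∈ ℋ}` of joins. -/
def joinFam {V₁ V₂ : Type*} (𝒢 : Set (SimpleGraph V₁)) (ℋ : Set (SimpleGraph V₂)) :
    Set (SimpleGraph (V₁ ⊕ V₂)) :=
  {K | ∃ G ∈ 𝒢, ∃ H ∈ ℋ, K = joinG G H}

/-- The family `𝒢_B(G)`: all graphs `G'` such that, for some permutation `f` of the
vertex set fixing `B` pointwise, `N_{G'}(x) = f(N_G(x))` for every `x ∈ B`. -/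
def GBfam {V : Type*} (G : SimpleGraph V) (B : Set V) : Set (SimpleGraph V) :=
  {G' | ∃ f : Equiv.Perm V, (∀ x ∈ B, f x = x) ∧
    ∀ x ∈ B, G'.neighborSet x = f '' (G.neighborSet x)}

/-!
Upper bound: the copies of `B` in all the copies of `H` form a simultaneous adjacency generator
of `𝒢 ⊙ ℋ`. Two vertices of one copy `H_i` are separated by `B` itself; a vertex of `H_i` is
separated from `i` by a vertex of `B` outside its neighbourhood, and from every other vertex by a
vertex of `B` dominating it; two vertices `i ≠ j` of `G` by any vertex of `B` in `H_i`.

Lower bound: a vertex outside `H_i` is adjacent to all or to none of `H_i`, so the trace on `H_i`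
of a simultaneous adjacency generator of `𝒢 ⊙ ℋ` is one of `ℋ`; sum over the `|V|` copies.
-/

universe u v

section Corona

variable {V : Type u} {V' : Type v} {G : SimpleGraph V} {H : SimpleGraph V'}

@[simp] lemma corona_adj_inl_inr {i : V} {p : V × V'} :
    (corona G H).Adj (.inl i) (.inr p) ↔ i = p.1 := Iff.rfl

@[simp] lemma corona_adj_inr_inr {p q : V × V'} :
    (corona G H).Adj (.inr p) (.inr q) ↔ p.1 = q.1 ∧ H.Adj p.2 q.2 := Iff.rfl

variable (V) in
def coronaCopy (B : Set V') : Set (V ⊕ V × V') := Sum.inr '' (Set.univ ×ˢ B)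

@[simp] lemma inr_mem_coronaCopy {B : Set V'} {i : V} {v : V'} :
    Sum.inr (i, v) ∈ coronaCopy V B ↔ v ∈ B := by
  simp [coronaCopy]

lemma ncard_coronaCopy [Fintype V] (B : Set V') :
    (coronaCopy V B).ncard = Fintype.card V * B.ncard := by
  rw [coronaCopy, Set.ncard_image_of_injective _ Sum.inr_injective, Set.ncard_prod,
    Set.ncard_univ, Nat.card_eq_fintype_card]

def coronaFiber (T : Set (V ⊕ V × V')) (i : V) : Set V' := {v | Sum.inr (i, v) ∈ T}

end Corona

section Generators

variable {V : Type u} {V' : Type v} {G : SimpleGraph V} {H : SimpleGraph V'} {B : Set V'}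

lemma exists_coronaCopy_xor_inl_inl (hB : B.Nonempty) {i j : V} (hij : i ≠ j) :
    ∃ s ∈ coronaCopy V B, Xor ((corona G H).Adj s (.inl i)) ((corona G H).Adj s (.inl j)) := by
  obtain ⟨b, hb⟩ := hB
  exact ⟨.inr (i, b), inr_mem_coronaCopy.2 hb, .inl ⟨rfl, hij⟩⟩

lemma exists_coronaCopy_xor_inl_inr (hdom : IsDomSet H B)
    (hnb : ∀ v, ¬ B ⊆ H.neighborSet v) (j : V) {i : V} {u : V'} (hu : u ∉ B) :
    ∃ s ∈ coronaCopy V B,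
      Xor ((corona G H).Adj s (.inl j)) ((corona G H).Adj s (.inr (i, u))) := by
  by_cases hij : i = j
  · subst hij
    obtain ⟨b, hb, hbu⟩ := Set.not_subset.mp (hnb u)
    exact ⟨.inr (i, b), inr_mem_coronaCopy.2 hb, .inl ⟨rfl, fun h => hbu (H.adj_symm h.2)⟩⟩
  · obtain ⟨b, hb, hbu⟩ := hdom u hu
    exact ⟨.inr (i, b), inr_mem_coronaCopy.2 hb, .inr ⟨⟨rfl, hbu⟩, hij⟩⟩

lemma exists_coronaCopy_xor_inr_inr (hgen : IsAdjGen H B) (hdom : IsDomSet H B)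
    {i j : V} {u w : V'} (hu : u ∉ B) (hw : w ∉ B) (hne : (i, u) ≠ (j, w)) :
    ∃ s ∈ coronaCopy V B,
      Xor ((corona G H).Adj s (.inr (i, u))) ((corona G H).Adj s (.inr (j, w))) := by
  by_cases hij : i = j
  · subst hij
    obtain ⟨b, hb, hxor : Xor _ _⟩ := hgen u w hu hw fun h => hne (by rw [h])
    refine ⟨.inr (i, b), inr_mem_coronaCopy.2 hb, ?_⟩
    simpa using hxor
  · obtain ⟨b, hb, hbu⟩ := hdom u hu
    exact ⟨.inr (i, b), inr_mem_coronaCopy.2 hb, .inl ⟨⟨rfl, hbu⟩, fun h => hij h.1⟩⟩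

lemma isAdjGen_corona_coronaCopy [Nonempty V'] (G : SimpleGraph V) (hgen : IsAdjGen H B)
    (hdom : IsDomSet H B) (hnb : ∀ v, ¬ B ⊆ H.neighborSet v) :
    IsAdjGen (corona G H) (coronaCopy V B) := by
  obtain ⟨b, hb, -⟩ := Set.not_subset.mp (hnb (Classical.arbitrary V'))
  rintro (i | ⟨i, u⟩) (j | ⟨j, w⟩) hx hy hxy
  · exact exists_coronaCopy_xor_inl_inl ⟨b, hb⟩ fun h => hxy (congrArg _ h)
  · exact exists_coronaCopy_xor_inl_inr hdom hnb i fun h => hy (inr_mem_coronaCopy.2 h)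
  · obtain ⟨s, hs, hxor⟩ :=
      exists_coronaCopy_xor_inl_inr (G := G) hdom hnb j fun h => hx (inr_mem_coronaCopy.2 h)
    exact ⟨s, hs, (xor_comm _ _).mp hxor⟩
  · exact exists_coronaCopy_xor_inr_inr hgen hdom (fun h => hx (inr_mem_coronaCopy.2 h))
      (fun h => hy (inr_mem_coronaCopy.2 h)) fun h => hxy (congrArg _ h)

lemma isAdjGen_coronaFiber {T : Set (V ⊕ V × V')} (hT : IsAdjGen (corona G H) T) (i : V) :
    IsAdjGen H (coronaFiber T i) := by
  intro u w hu hw huw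
  obtain ⟨s | ⟨j, b⟩, hs, hxor : Xor _ _⟩ :=
    hT (.inr (i, u)) (.inr (i, w)) hu hw (by simpa using huw)
  · simp at hxor
  · obtain ⟨rfl, -⟩ | ⟨rfl, -⟩ := hxor.or <;>
      exact ⟨b, hs, show Xor _ _ by simpa using hxor⟩

lemma sum_ncard_coronaFiber_le [Fintype V] [Finite V'] (T : Set (V ⊕ V × V')) :
    ∑ i, (coronaFiber T i).ncard ≤ T.ncard := by
  let copy (i : V) : Set (V ⊕ V × V') := (fun v => .inr (i, v)) '' coronaFiber T i
  have hinj (i : V) : Function.Injective fun v : V' => (.inr (i, v) : V ⊕ V × V') :=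
    fun u w h => by simpa using h
  have hdisj : Pairwise fun i j => Disjoint (copy i) (copy j) := fun i j hij =>
    Set.disjoint_left.2 fun _ ⟨_, _, hx⟩ ⟨_, _, hy⟩ =>
      hij (congrArg Prod.fst (Sum.inr_injective (hx.trans hy.symm)))
  calc ∑ i, (coronaFiber T i).ncard = ∑ i, (copy i).ncard := by
        simp only [copy, Set.ncard_image_of_injective _ (hinj _)]
    _ = (⋃ i, copy i).ncard := by
        rw [Set.ncard_iUnion_of_finite (fun _ => Set.toFinite _) hdisj, finsum_eq_sum_of_fintype]
    _ ≤ T.ncard := Set.ncard_le_ncard (Set.iUnion_subset fun i => by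
        rintro _ ⟨v, hv, rfl⟩; exact hv)

end Generators

section Dimension

variable {V : Type u} {ℋ : Set (SimpleGraph V)}

lemma sdA_le_ncard {S : Set V} (h : IsSimAdjGen ℋ S) : SdA ℋ ≤ S.ncard :=
  Nat.sInf_le ⟨S, rfl, h⟩

lemma isSimAdjGen_univ : IsSimAdjGen ℋ Set.univ :=
  fun _ _ x _ hx => absurd (Set.mem_univ x) hx

lemma le_sdA {n : ℕ} (h : ∀ S, IsSimAdjGen ℋ S → n ≤ S.ncard) : n ≤ SdA ℋ :=
  le_csInf ⟨_, Set.univ, rfl, isSimAdjGen_univ⟩ fun _ ⟨S, hS, hgen⟩ => hS ▸ h S hgen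

end Dimension

section Families

variable {V : Type u} {V' : Type v} {𝒢 : Set (SimpleGraph V)} {ℋ : Set (SimpleGraph V')}
  {B : Set V'}

lemma isSimAdjGen_coronaFam_coronaCopy [Nonempty V'] (hgen : IsSimAdjGen ℋ B)
    (hdom : IsSimDomSet ℋ B) (hnb : ∀ H ∈ ℋ, ∀ v, ¬ B ⊆ H.neighborSet v) :
    IsSimAdjGen (coronaFam 𝒢 ℋ) (coronaCopy V B) := by
  rintro _ ⟨G, -, H, hH, rfl⟩
  exact isAdjGen_corona_coronaCopy G (hgen H hH) (hdom H hH) (hnb H hH)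

lemma isSimAdjGen_coronaFiber {T : Set (V ⊕ V × V')} (hT : IsSimAdjGen (coronaFam 𝒢 ℋ) T)
    {G : SimpleGraph V} (hG : G ∈ 𝒢) (i : V) : IsSimAdjGen ℋ (coronaFiber T i) :=
  fun H hH => isAdjGen_coronaFiber (hT _ ⟨G, hG, H, hH, rfl⟩) i

end Families

theorem statement_5_general {V V' : Type*} [Fintype V] [Fintype V'] [Nontrivial V']
    (𝒢 : Set (SimpleGraph V)) (h𝒢ne : 𝒢.Nonempty)
    (ℋ : Set (SimpleGraph V'))
    (B : Set V') (hB : IsSimAdjBasis ℋ B) (hdom : IsSimDomSet ℋ B)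
    (hnb : ∀ H ∈ ℋ, ∀ v : V', ¬ B ⊆ H.neighborSet v) :
    SdA (coronaFam 𝒢 ℋ) = Fintype.card V * SdA ℋ := by
  obtain ⟨G, hG⟩ := h𝒢ne
  refine le_antisymm ?_ (le_sdA fun T hT => ?_)
  · calc SdA (coronaFam 𝒢 ℋ) ≤ (coronaCopy V B).ncard :=
          sdA_le_ncard (isSimAdjGen_coronaFam_coronaCopy hB.1 hdom hnb)
      _ = Fintype.card V * SdA ℋ := by rw [ncard_coronaCopy, hB.2]
  · calc Fintype.card V * SdA ℋ = ∑ _i : V, SdA ℋ := by simp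
      _ ≤ ∑ i, (coronaFiber T i).ncard :=
          Finset.sum_le_sum fun i _ => sdA_le_ncard (isSimAdjGen_coronaFiber hT hG i)
      _ ≤ T.ncard := sum_ncard_coronaFiber_le T

theorem statement_5 {V V' : Type*} [Fintype V] [Fintype V'] [Nontrivial V] [Nontrivial V']
    (𝒢 : Set (SimpleGraph V)) (h𝒢ne : 𝒢.Nonempty) (h𝒢 : ∀ G ∈ 𝒢, G.Connected)
    (ℋ : Set (SimpleGraph V')) (hℋne : ℋ.Nonempty)
    (B : Set V') (hB : IsSimAdjBasis ℋ B) (hdom : IsSimDomSet ℋ B)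
    (hnb : ∀ H ∈ ℋ, ∀ v : V', ¬ B ⊆ H.neighborSet v) :
    SdA (coronaFam 𝒢 ℋ) = Fintype.card V * SdA ℋ :=
  statement_5_general 𝒢 h𝒢ne ℋ B hB hdom hnb
end

section
/- Let P_n be a path graph and C_n a cycle graph of order n ≥ 7. If n ≡ 1 (mod 5) or n ≡ 3 (mod 5), then no adjacency basis of P_n is a dominating set of P_n, and no adjacency basis of C_n is a dominating set of C_n. -/
open SimpleGraph

/-! If `S` is a dominating adjacency generator of a graph of maximum degree `2` on `n` vertices,
count the edges between `S` and its complement `T`. Every vertex of `T` has a neighbour in `S`;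
those with exactly one have pairwise distinct ones, since nothing else could tell two of them
apart; and every vertex of `S` has at most two neighbours. Hence `2 #T ≤ #S + 2 #S`, that is
`2 n ≤ 5 #S`. On the other hand the labels `1, 3 (mod 5)`, adjusted at the end when
`n ≡ 3 (mod 5)`, form an adjacency generator of `P_n` and of `C_n` with `⌊(2n + 2)/5⌋`
elements, and `5 ⌊(2n + 2)/5⌋ < 2 n` exactly when `n ≡ 1, 3 (mod 5)`. -/

open Finset

section Domination

variable {V : Type*} [Fintype V] [DecidableEq V] {G : SimpleGraph V} [DecidableRel G.Adj]
  {S : Finset V}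

theorem IsAdjGen.card_filter_card_bipartiteBelow_eq_one_le (hS : IsAdjGen G S) :
    #{v ∈ Sᶜ | #(S.bipartiteBelow G.Adj v) = 1} ≤ #S := by
  refine card_le_card_of_forall_subsingleton (fun v s => G.Adj s v) (fun v hv => ?_) ?_
  · obtain ⟨s, hs⟩ := card_eq_one.mp (mem_filter.mp hv).2
    exact ⟨s, (mem_bipartiteBelow G.Adj).mp (hs ▸ mem_singleton_self s)⟩
  · intro s hs x ⟨hx, hsx⟩ y ⟨hy, hsy⟩
    simp only [mem_filter, mem_compl] at hx hy
    by_contra hxy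
    have unique {v : V} (hv : #(S.bipartiteBelow G.Adj v) = 1) {t : V} (ht : t ∈ S)
        (htv : G.Adj t v) (hsv : G.Adj s v) : t = s :=
      card_le_one.mp hv.le t ((mem_bipartiteBelow _).mpr ⟨ht, htv⟩) s
        ((mem_bipartiteBelow _).mpr ⟨hs, hsv⟩)
    obtain ⟨t, ht, ⟨htx, hty⟩ | ⟨htx, hty⟩⟩ := hS x y hx.1 hy.1 hxy
    · exact hty (unique hx.2 ht htx hsx ▸ hsy)
    · exact hty (unique hy.2 ht htx hsy ▸ hsx)

theorem IsDomSet.two_mul_card_compl_le (hS : IsDomSet G S) :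
    2 * #Sᶜ ≤ #{v ∈ Sᶜ | #(S.bipartiteBelow G.Adj v) = 1} +
      ∑ v ∈ Sᶜ, #(S.bipartiteBelow G.Adj v) := by
  rw [card_filter, ← sum_add_distrib, mul_comm, ← smul_eq_mul, ← sum_const]
  refine sum_le_sum fun v hv => ?_
  obtain ⟨s, hs, hsv⟩ := hS v (by simpa using hv)
  have : 0 < #(S.bipartiteBelow G.Adj v) :=
    card_pos.mpr ⟨s, (mem_bipartiteBelow _).mpr ⟨hs, hsv⟩⟩
  split_ifs <;> omega

theorem sum_card_bipartiteBelow_compl_le {Δ : ℕ} (hdeg : ∀ v, G.degree v ≤ Δ) :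
    ∑ v ∈ Sᶜ, #(S.bipartiteBelow G.Adj v) ≤ Δ * #S := by
  rw [← sum_card_bipartiteAbove_eq_sum_card_bipartiteBelow, mul_comm, ← smul_eq_mul,
    ← sum_const]
  refine sum_le_sum fun s _ => (card_le_card fun v hv => ?_).trans (hdeg s)
  simpa using ((mem_bipartiteAbove _).mp hv).2

theorem two_mul_card_le_of_isAdjGen_of_isDomSet {Δ : ℕ} (hdeg : ∀ v, G.degree v ≤ Δ)
    (hgen : IsAdjGen G S) (hdom : IsDomSet G S) :
    2 * Fintype.card V ≤ (Δ + 3) * #S := by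
  have h₁ := hgen.card_filter_card_bipartiteBelow_eq_one_le
  have h₂ := hdom.two_mul_card_compl_le
  have h₃ := sum_card_bipartiteBelow_compl_le (S := S) hdeg
  rw [← card_add_card_compl S]
  linarith

theorem not_isDomSet_of_isAdjBasis {Δ : ℕ} (hdeg : ∀ v, G.degree v ≤ Δ)
    (hdim : (Δ + 3) * adjDim G < 2 * Fintype.card V) {B : Set V} (hB : IsAdjBasis G B) :
    ¬ IsDomSet G B := by
  classical
  intro hdom
  have := two_mul_card_le_of_isAdjGen_of_isDomSet (S := B.toFinset) hdeg
    (by simpa using hB.1) (by simpa using hdom)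
  rw [← Set.ncard_eq_toFinset_card', hB.2] at this
  omega

end Domination

theorem adjDim_le_ncard {V : Type*} {G : SimpleGraph V} {S : Set V} (h : IsAdjGen G S) :
    adjDim G ≤ S.ncard :=
  Nat.sInf_le ⟨S, rfl, fun _ hH => Set.mem_singleton_iff.mp hH ▸ h⟩

theorem cycleGraph_degree_le_two {n : ℕ} (v : Fin n) : (cycleGraph n).degree v ≤ 2 := by
  match n with
  | 0 => exact v.elim0
  | 1 => simp [degree]
  | _ + 2 => exact cycleGraph_degree_two_le ▸ card_le_two

theorem pathGraph_degree_le_two {n : ℕ} [DecidableRel (pathGraph n).Adj] (v : Fin n) :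
    (pathGraph n).degree v ≤ 2 :=
  (degree_le_of_le pathGraph_le_cycleGraph).trans (cycleGraph_degree_le_two v)

-- Adjacency of vertex labels in `pathGraph n`, plus the closing edge of `cycleGraph n` if `w = 1`.
def pathCycleAdj (n w x y : ℕ) : Prop :=
  x + 1 = y ∨ y + 1 = x ∨ (w = 1 ∧ (x = 0 ∧ y + 1 = n ∨ y = 0 ∧ x + 1 = n))

theorem pathGraph_adj_iff_pathCycleAdj {n : ℕ} (u v : Fin n) :
    (pathGraph n).Adj u v ↔ pathCycleAdj n 0 u v := by
  rw [pathGraph_adj, pathCycleAdj]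
  omega

theorem cycleGraph_adj_iff_pathCycleAdj {n : ℕ} (hn : 2 ≤ n) (u v : Fin n) :
    (cycleGraph n).Adj u v ↔ pathCycleAdj n 1 u v := by
  rw [cycleGraph_adj', pathCycleAdj]
  have := u.isLt
  have := v.isLt
  rcases lt_trichotomy u v with h | rfl | h
  · rw [Fin.coe_sub_iff_lt.mpr h, Fin.sub_val_of_le h.le]
    rw [Fin.lt_def] at h
    omega
  · rw [Fin.sub_val_of_le le_rfl]
    omega
  · rw [Fin.sub_val_of_le h.le, Fin.coe_sub_iff_lt.mpr h]
    rw [Fin.lt_def] at h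
    omega

-- When `n % 5 = 1` the condition `m + 2 < n` excludes no label; when `n % 5 = 3` it removes
-- `n - 2`, which is replaced by `n - 1`.
def adjGenLabels (n : ℕ) : Finset ℕ :=
  {m ∈ range n | (m % 5 = 1 ∨ m % 5 = 3) ∧ m + 2 < n ∨ n % 5 = 3 ∧ m + 1 = n}

theorem card_filter_range_mod_five (N : ℕ) :
    #{m ∈ range N | m % 5 = 1 ∨ m % 5 = 3} = (2 * N + 2) / 5 := by
  induction N with
  | zero => rfl
  | succ k ih =>
    rw [range_add_one, filter_insert]
    split_ifs
    · rw [card_insert_of_notMem (by simp), ih]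
      omega
    · rw [ih]
      omega

theorem card_adjGenLabels {n : ℕ} (h15 : n % 5 = 1 ∨ n % 5 = 3) :
    #(adjGenLabels n) = (2 * n + 2) / 5 := by
  rcases h15 with h | h
  · rw [adjGenLabels, ← card_filter_range_mod_five]
    congr 1
    refine filter_congr fun m hm => ?_
    simp only [mem_range] at hm
    omega
  · have : adjGenLabels n = insert (n - 1) {m ∈ range (n - 2) | m % 5 = 1 ∨ m % 5 = 3} := by
      ext m
      simp only [adjGenLabels, mem_filter, mem_range, mem_insert]
      omega
    rw [this, card_insert_of_notMem (by simp; omega), card_filter_range_mod_five]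
    omega

theorem exists_mem_adjGenLabels_xor_of_mod_five_eq_one {n w a b : ℕ}
    (h5 : n % 5 = 1) (ha : a < n) (hb : b < n) (hab : a ≠ b)
    (hA : a ∉ adjGenLabels n) (hB : b ∉ adjGenLabels n) :
    ∃ m ∈ adjGenLabels n, Xor (pathCycleAdj n w m a) (pathCycleAdj n w m b) := by
  simp only [adjGenLabels, mem_filter, mem_range, pathCycleAdj, xor_def] at *
  by_cases a % 5 = 2
  · by_cases b + 2 = a
    · exact ⟨a + 1, by omega⟩
    · exact ⟨a - 1, by omega⟩
  · by_cases a % 5 = 4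
    · by_cases b + 2 = a
      · exact ⟨a - 3, by omega⟩
      · exact ⟨a - 1, by omega⟩
    · by_cases a + 1 < n
      · by_cases b = a + 2
        · exact ⟨b + 1, by omega⟩
        · exact ⟨a + 1, by omega⟩
      · by_cases b % 5 = 0
        · exact ⟨b + 1, by omega⟩
        · exact ⟨b - 1, by omega⟩

theorem exists_mem_adjGenLabels_xor_of_mod_five_eq_three {n w a b : ℕ}
    (hn : 3 < n) (h5 : n % 5 = 3) (ha : a < n) (hb : b < n) (hab : a ≠ b)
    (hA : a ∉ adjGenLabels n) (hB : b ∉ adjGenLabels n) :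
    ∃ m ∈ adjGenLabels n, Xor (pathCycleAdj n w m a) (pathCycleAdj n w m b) := by
  simp only [adjGenLabels, mem_filter, mem_range, pathCycleAdj, xor_def] at *
  by_cases a + 2 = n
  · by_cases b = 0 ∧ w = 1
    · exact ⟨1, by omega⟩
    · exact ⟨n - 1, by omega⟩
  · by_cases b + 2 = n
    · by_cases a = 0 ∧ w = 1
      · exact ⟨1, by omega⟩
      · exact ⟨n - 1, by omega⟩
    · by_cases a % 5 = 2
      · by_cases b + 2 = a
        · exact ⟨a + 1, by omega⟩
        · exact ⟨a - 1, by omega⟩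
      · by_cases a % 5 = 4
        · by_cases b + 2 = a
          · exact ⟨b - 1, by omega⟩
          · exact ⟨a - 1, by omega⟩
        · by_cases a = 0
          · by_cases w = 1
            · exact ⟨n - 1, by omega⟩
            · by_cases b = 2
              · exact ⟨3, by omega⟩
              · exact ⟨1, by omega⟩
          · by_cases a + 3 = n
            · by_cases b % 5 = 2 ∨ b % 5 = 4
              · exact ⟨b - 1, by omega⟩
              · by_cases b = 0
                · by_cases w = 1
                  · exact ⟨n - 1, by omega⟩
                  · exact ⟨1, by omega⟩
                · exact ⟨b + 1, by omega⟩
            · by_cases b = a + 2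
              · exact ⟨b + 1, by omega⟩
              · exact ⟨a + 1, by omega⟩

theorem isAdjGen_preimage_adjGenLabels {n w : ℕ} {G : SimpleGraph (Fin n)} (hn : 3 < n)
    (h15 : n % 5 = 1 ∨ n % 5 = 3) (hadj : ∀ u v, G.Adj u v ↔ pathCycleAdj n w u v) :
    IsAdjGen G (Fin.val ⁻¹' adjGenLabels n) := by
  intro x y hx hy hxy
  obtain ⟨m, hm, hxor⟩ :
      ∃ m ∈ adjGenLabels n, Xor (pathCycleAdj n w m x) (pathCycleAdj n w m y) := by
    rcases h15 with h | h
    · exact exists_mem_adjGenLabels_xor_of_mod_five_eq_one h x.isLt y.isLt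
        (Fin.val_injective.ne hxy) hx hy
    · exact exists_mem_adjGenLabels_xor_of_mod_five_eq_three hn h x.isLt y.isLt
        (Fin.val_injective.ne hxy) hx hy
  refine ⟨⟨m, mem_range.mp (mem_filter.mp hm).1⟩, hm, ?_⟩
  rw [hadj, hadj]
  exact hxor

theorem adjDim_le_of_adj_iff_pathCycleAdj {n w : ℕ} {G : SimpleGraph (Fin n)} (hn : 3 < n)
    (h15 : n % 5 = 1 ∨ n % 5 = 3) (hadj : ∀ u v, G.Adj u v ↔ pathCycleAdj n w u v) :
    adjDim G ≤ (2 * n + 2) / 5 := by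
  have hrange : (adjGenLabels n : Set ℕ) ⊆ Set.range (Fin.val : Fin n → ℕ) := by
    rw [Fin.range_val]
    exact fun m hm => mem_range.mp (mem_filter.mp hm).1
  calc adjDim G ≤ (Fin.val ⁻¹' (adjGenLabels n : Set ℕ)).ncard :=
        adjDim_le_ncard (isAdjGen_preimage_adjGenLabels hn h15 hadj)
    _ = #(adjGenLabels n) := by
        rw [Set.ncard_preimage_of_injective_subset_range Fin.val_injective hrange,
          Set.ncard_coe_finset]
    _ = (2 * n + 2) / 5 := card_adjGenLabels h15

theorem statement_8 (n : ℕ) (hn : 7 ≤ n) (h15 : n % 5 = 1 ∨ n % 5 = 3) :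
    (∀ B : Set (Fin n), IsAdjBasis (SimpleGraph.pathGraph n) B →
      ¬ IsDomSet (SimpleGraph.pathGraph n) B) ∧
    (∀ B : Set (Fin n), IsAdjBasis (SimpleGraph.cycleGraph n) B →
      ¬ IsDomSet (SimpleGraph.cycleGraph n) B) := by
  classical
  have not_isDomSet {w : ℕ} (G : SimpleGraph (Fin n)) [DecidableRel G.Adj]
      (hdeg : ∀ v, G.degree v ≤ 2) (hadj : ∀ u v, G.Adj u v ↔ pathCycleAdj n w u v)
      (B : Set (Fin n)) :
      IsAdjBasis G B → ¬ IsDomSet G B := by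
    refine not_isDomSet_of_isAdjBasis hdeg ?_
    have := adjDim_le_of_adj_iff_pathCycleAdj (by omega) h15 hadj
    rw [Fintype.card_fin]
    omega
  exact ⟨not_isDomSet _ pathGraph_degree_le_two pathGraph_adj_iff_pathCycleAdj,
    not_isDomSet _ cycleGraph_degree_le_two (cycleGraph_adj_iff_pathCycleAdj (by omega))⟩
end
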